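/- Scaling preserves connectivity: a set Q ⊆ ℤ² is connected under grid adjacency if and only if its 2-scaled version P = {(2a+i, 2b+j) : (a,b) ∈ Q, i,j ∈ {0,1}} is connected under grid adjacency. -/

import Mathlib

/-- Grid adjacency on ℤ²: cells differ by 1 in exactly one coordinate. -/
def GridAdj (p q : ℤ × ℤ) : Prop :=
  (|p.1 - q.1| = 1 ∧ p.2 = q.2) ∨ (p.1 = q.1 ∧ |p.2 - q.2| = 1)

/-- A set of cells is connected under grid adjacency. -/
def GridConnected (P : Set (ℤ × ℤ)) : Prop :=
  ∀ p ∈ P, ∀ q ∈ P,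
    Relation.ReflTransGen (fun a b => a ∈ P ∧ b ∈ P ∧ GridAdj a b) p q

/-- The 2-scaled version of a cell set. -/
def Scaled (Q : Set (ℤ × ℤ)) : Set (ℤ × ℤ) :=
  {p | ∃ a b i j : ℤ, (a, b) ∈ Q ∧ (i = 0 ∨ i = 1) ∧ (j = 0 ∨ j = 1) ∧
    p = (2 * a + i, 2 * b + j)}

/-!
`Scaled Q` is the preimage of `Q` under halving `p ↦ (p.1 / 2, p.2 / 2)`. Halving sends adjacent
cells to equal or adjacent cells, so paths in `Scaled Q` project to paths in `Q`. Conversely,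
doubling sends a step of `Q` to a two-step path in `Scaled Q`, and every cell of `Scaled Q` is
joined to the double of its half inside its 2×2 block.
-/

open Relation

lemma gridAdj_iff (p q : ℤ × ℤ) : GridAdj p q ↔
    ((p.1 = q.1 + 1 ∨ p.1 = q.1 - 1) ∧ p.2 = q.2) ∨
      (p.1 = q.1 ∧ (p.2 = q.2 + 1 ∨ p.2 = q.2 - 1)) := by
  unfold GridAdj
  rw [abs_eq zero_le_one, abs_eq zero_le_one]
  omega

lemma GridAdj.symm {p q : ℤ × ℤ} (h : GridAdj p q) : GridAdj q p := by
  rw [gridAdj_iff] at h ⊢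
  omega

def GridStep (P : Set (ℤ × ℤ)) (a b : ℤ × ℤ) : Prop :=
  a ∈ P ∧ b ∈ P ∧ GridAdj a b

instance (P : Set (ℤ × ℤ)) : Std.Symm (GridStep P) where
  symm _ _ h := ⟨h.2.1, h.1, h.2.2.symm⟩

lemma reflTransGen_gridStep_of_eq_or_gridAdj {P : Set (ℤ × ℤ)} {a b : ℤ × ℤ}
    (ha : a ∈ P) (hb : b ∈ P) (h : a = b ∨ GridAdj a b) : ReflTransGen (GridStep P) a b := by
  rcases h with rfl | hab
  · exact .refl
  · exact .single ⟨ha, hb, hab⟩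

theorem GridConnected.of_map {P Q : Set (ℤ × ℤ)} (f : ℤ × ℤ → ℤ × ℤ) (hQ : GridConnected Q)
    (hstep : ∀ a b, GridStep Q a b → ReflTransGen (GridStep P) (f a) (f b))
    (hcover : ∀ p ∈ P, ∃ a ∈ Q, ReflTransGen (GridStep P) (f a) p) : GridConnected P := by
  intro p hp q hq
  obtain ⟨a, ha, hap⟩ := hcover p hp
  obtain ⟨b, hb, hbq⟩ := hcover q hq
  exact (symm hap).trans ((ReflTransGen.lift' f hstep _ _ (hQ a ha b hb)).trans hbq)

def half (p : ℤ × ℤ) : ℤ × ℤ := (p.1 / 2, p.2 / 2)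

def double (a : ℤ × ℤ) : ℤ × ℤ := (2 * a.1, 2 * a.2)

lemma half_double (a : ℤ × ℤ) : half (double a) = a := by
  simp [half, double]

lemma mem_scaled_iff {Q : Set (ℤ × ℤ)} {p : ℤ × ℤ} : p ∈ Scaled Q ↔ half p ∈ Q := by
  constructor
  · rintro ⟨a, b, i, j, hab, hi, hj, rfl⟩
    convert hab using 1
    simp only [half, Prod.mk.injEq]
    omega
  · intro h
    refine ⟨p.1 / 2, p.2 / 2, p.1 % 2, p.2 % 2, h, by omega, by omega, ?_⟩
    ext <;> simp only <;> omega

lemma double_mem_scaled {Q : Set (ℤ × ℤ)} {a : ℤ × ℤ} (ha : a ∈ Q) : double a ∈ Scaled Q := by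
  rwa [mem_scaled_iff, half_double]

lemma half_eq_or_gridAdj {p q : ℤ × ℤ} (h : GridAdj p q) :
    half p = half q ∨ GridAdj (half p) (half q) := by
  rw [gridAdj_iff] at h
  simp only [half, gridAdj_iff, Prod.mk.injEq]
  omega

/-- The doubled cells of two neighbours are joined through their midpoint `a + b`, which lies in
the block of one of them. -/
lemma reflTransGen_double_of_gridStep {Q : Set (ℤ × ℤ)} {a b : ℤ × ℤ} (h : GridStep Q a b) :
    ReflTransGen (GridStep (Scaled Q)) (double a) (double b) := by
  obtain ⟨ha, hb, hab⟩ := h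
  rw [gridAdj_iff] at hab
  have hmid : a + b ∈ Scaled Q := by
    have : half (a + b) = a ∨ half (a + b) = b := by
      simp only [half, Prod.fst_add, Prod.snd_add, Prod.ext_iff]
      omega
    rw [mem_scaled_iff]
    rcases this with h | h <;> rwa [h]
  refine .head ⟨double_mem_scaled ha, hmid, ?_⟩ (.single ⟨hmid, double_mem_scaled hb, ?_⟩) <;>
  · simp only [double, gridAdj_iff, Prod.fst_add, Prod.snd_add]
    omega

lemma reflTransGen_double_half {Q : Set (ℤ × ℤ)} {p : ℤ × ℤ} (hp : p ∈ Scaled Q) :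
    ReflTransGen (GridStep (Scaled Q)) (double (half p)) p := by
  have hcorner : (p.1, 2 * (p.2 / 2)) ∈ Scaled Q := by
    have : half (p.1, 2 * (p.2 / 2)) = half p := by
      simp only [half, Prod.mk.injEq, true_and]
      omega
    rwa [mem_scaled_iff, this, ← mem_scaled_iff]
  refine ReflTransGen.trans (b := (p.1, 2 * (p.2 / 2)))
    (reflTransGen_gridStep_of_eq_or_gridAdj (double_mem_scaled (mem_scaled_iff.1 hp)) hcorner ?_)
    (reflTransGen_gridStep_of_eq_or_gridAdj hcorner hp ?_) <;>
  · simp only [double, half, gridAdj_iff, Prod.ext_iff, and_true, true_and]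
    omega

theorem scaling_preserves_connectivity (Q : Set (ℤ × ℤ)) :
    GridConnected Q ↔ GridConnected (Scaled Q) := by
  constructor
  · intro hQ
    refine hQ.of_map double (fun a b ↦ reflTransGen_double_of_gridStep) fun p hp ↦ ?_
    exact ⟨half p, mem_scaled_iff.1 hp, reflTransGen_double_half hp⟩
  · intro hP
    refine hP.of_map half (fun p q ⟨hp, hq, hpq⟩ ↦ ?_) fun a ha ↦ ?_
    · exact reflTransGen_gridStep_of_eq_or_gridAdj (mem_scaled_iff.1 hp) (mem_scaled_iff.1 hq)
        (half_eq_or_gridAdj hpq)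
    · exact ⟨double a, double_mem_scaled ha, by rw [half_double]⟩
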